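/- There exists a primitive isometric embedding of E_8⊕A_1^5 into E_8⊕E_8⊕E_8 whose orthogonal complement (with the restricted form) is isometric to E_7⊕A_1^4, and there exists a primitive isometric embedding of E_8⊕A_1⊕D_4 into E_8⊕E_8⊕E_8 whose orthogonal complement is isometric to E_7⊕D_4. -/

import Mathlib

/-
Each summand of the source is embedded into its own copy of `E₈`, and the three pieces are glued
by orthogonal sums. `E₈` goes to itself, with trivial complement since `E₈` is unimodular. `A₁`
goes to the highest root `θ = (2,4,6,5,4,3,2,3)` (in simple-root coordinates); `θ` pairs
nontrivially only with `α₆`, so its complement is spanned by the other simple roots, which form an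
`E₇` diagram. `D₄` and `A₁⁴` go to sets of simple roots, whose complements are again `D₄` and
`A₁⁴`. Each piece is certified by integral matrices: left inverses give primitivity, and an
identity `B K' + D (G A)ᵀ = 1` shows that the columns of `B` span the whole orthogonal complement.
-/

open Matrix

/-- Gram matrix of the hyperbolic plane `U`. -/
def gramU : Matrix (Fin 2) (Fin 2) ℤ := !![0, 1; 1, 0]

/-- Gram matrix of `U(2)`. -/
def gramU2 : Matrix (Fin 2) (Fin 2) ℤ := !![0, 2; 2, 0]

/-- Gram matrix of `A₁`. -/
def gramA1 : Matrix (Fin 1) (Fin 1) ℤ := !![-2]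

/-- Gram matrix of the negative definite root lattice whose Dynkin diagram is a chain
on nodes `0, …, n-2` together with an extra node `n-1` attached to node `k`
(`k = 2` gives the `E`-series, `k = 1` the `D`-series). -/
def gramRoot (n k : ℕ) : Matrix (Fin n) (Fin n) ℤ :=
  Matrix.of fun i j =>
    if i = j then -2
    else if (((i : ℕ) + 1 = j ∨ (j : ℕ) + 1 = i) ∧ (i : ℕ) + 1 ≠ n ∧ (j : ℕ) + 1 ≠ n) ∨
        ((i : ℕ) + 1 = n ∧ (j : ℕ) = k) ∨ ((j : ℕ) + 1 = n ∧ (i : ℕ) = k) then 1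
    else 0

/-- Gram matrix of the standard negative definite root lattice `E₈`. -/
def gramE8 : Matrix (Fin 8) (Fin 8) ℤ := gramRoot 8 2

/-- Gram matrix of the standard negative definite root lattice `E₇`. -/
def gramE7 : Matrix (Fin 7) (Fin 7) ℤ := gramRoot 7 2

/-- Gram matrix of the standard negative definite root lattice `D₄`. -/
def gramD4 : Matrix (Fin 4) (Fin 4) ℤ := gramRoot 4 1

/-- Gram matrix of the standard negative definite root lattice `D₆`. -/
def gramD6 : Matrix (Fin 6) (Fin 6) ℤ := gramRoot 6 1

/-- Gram matrix of the standard negative definite root lattice `D₁₂`. -/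
def gramD12 : Matrix (Fin 12) (Fin 12) ℤ := gramRoot 12 1

/-- Orthogonal (block diagonal) sum of two Gram matrices. -/
def blockSum {m n : ℕ} (A : Matrix (Fin m) (Fin m) ℤ) (B : Matrix (Fin n) (Fin n) ℤ) :
    Matrix (Fin (m + n)) (Fin (m + n)) ℤ :=
  Matrix.of fun i j =>
    if hi : (i : ℕ) < m then
      if hj : (j : ℕ) < m then A ⟨i, hi⟩ ⟨j, hj⟩ else 0
    else
      if hj : (j : ℕ) < m then 0
      else B ⟨(i : ℕ) - m, by have := i.isLt; omega⟩ ⟨(j : ℕ) - m, by have := j.isLt; omega⟩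

/-- Gram matrix of `T = U ⊕ U ⊕ E₈ ⊕ A₁⁵`. -/
def gramT : Matrix (Fin 17) (Fin 17) ℤ :=
  blockSum gramU (blockSum gramU (blockSum gramE8 (Matrix.diagonal fun _ : Fin 5 => (-2 : ℤ))))

/-- Gram matrix of `E₈ ⊕ E₈ ⊕ E₈`. -/
def gramE8x3 : Matrix (Fin 24) (Fin 24) ℤ := blockSum gramE8 (blockSum gramE8 gramE8)

/-- Gram matrix of `E₈ ⊕ A₁⁵`. -/
def gramE8A15 : Matrix (Fin 13) (Fin 13) ℤ :=
  blockSum gramE8 (Matrix.diagonal fun _ : Fin 5 => (-2 : ℤ))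

/-- Gram matrix of `E₈ ⊕ A₁ ⊕ D₄`. -/
def gramE8A1D4 : Matrix (Fin 13) (Fin 13) ℤ := blockSum gramE8 (blockSum gramA1 gramD4)

/-- Gram matrix of `E₇ ⊕ A₁⁴`. -/
def gramE7A14 : Matrix (Fin 11) (Fin 11) ℤ :=
  blockSum gramE7 (Matrix.diagonal fun _ : Fin 4 => (-2 : ℤ))

/-- Gram matrix of `E₇ ⊕ D₄`. -/
def gramE7D4 : Matrix (Fin 11) (Fin 11) ℤ := blockSum gramE7 gramD4

/-- There is a primitive isometric embedding (an injective linear map preserving the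
forms, with torsion-free cokernel) of `L₁` into `L₂` whose orthogonal complement with
the restricted form is isometric to `L₃`. -/
def HasPrimEmbeddingWithComplement {a b c : ℕ} (G₁ : Matrix (Fin a) (Fin a) ℤ)
    (G₂ : Matrix (Fin b) (Fin b) ℤ) (G₃ : Matrix (Fin c) (Fin c) ℤ) : Prop :=
  ∃ φ : (Fin a → ℤ) →ₗ[ℤ] (Fin b → ℤ),
    Function.Injective φ ∧
    (∀ x y : Fin a → ℤ, (φ x) ⬝ᵥ G₂.mulVec (φ y) = x ⬝ᵥ G₁.mulVec y) ∧
    (∀ (x : Fin b → ℤ) (t : ℤ), t ≠ 0 → t • x ∈ Set.range φ → x ∈ Set.range φ) ∧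
    ∃ ψ : (Fin c → ℤ) →ₗ[ℤ] (Fin b → ℤ),
      Function.Injective ψ ∧
      Set.range ψ = {x : Fin b → ℤ | ∀ z : Fin a → ℤ, x ⬝ᵥ G₂.mulVec (φ z) = 0} ∧
      ∀ x y : Fin c → ℤ, (ψ x) ⬝ᵥ G₂.mulVec (ψ y) = x ⬝ᵥ G₃.mulVec y

section MulVec

variable {R : Type*} {m n o : Type*} [Fintype m] [Fintype n]

theorem dotProduct_mulVec_mulVec [CommSemiring R] (G : Matrix m m R) (A : Matrix m n R)
    (B : Matrix m o R) [Fintype o] (x : n → R) (y : o → R) :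
    (A *ᵥ x) ⬝ᵥ G *ᵥ (B *ᵥ y) = x ⬝ᵥ (Aᵀ * G * B) *ᵥ y := by
  rw [mulVec_mulVec, dotProduct_mulVec, ← vecMul_transpose, vecMul_vecMul, dotProduct_mulVec,
    Matrix.mul_assoc]

theorem mulVec_injective_of_mul_eq_one [CommSemiring R] [DecidableEq n] {A : Matrix m n R}
    {K : Matrix n m R} (h : K * A = 1) : Function.Injective A.mulVec := fun x y hxy => by
  simpa only [mulVec_mulVec, h, one_mulVec] using congrArg (K *ᵥ ·) hxy

theorem mem_range_mulVec_of_smul_mem [DecidableEq n] {A : Matrix m n ℤ} {K : Matrix n m ℤ}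
    (h : K * A = 1) {x : m → ℤ} {t : ℤ} (ht : t ≠ 0) (hx : t • x ∈ Set.range A.mulVec) :
    x ∈ Set.range A.mulVec := by
  obtain ⟨u, hu⟩ := hx
  refine ⟨K *ᵥ x, smul_right_injective (m → ℤ) ht ?_⟩
  have hAK : A *ᵥ K *ᵥ (t • x) = t • x := by
    rw [← hu, mulVec_mulVec, mulVec_mulVec, Matrix.mul_assoc, h, Matrix.mul_one]
  simpa only [mulVec_smul] using hAK

/-- Every `x` splits as `B (K' x) + D ((G A)ᵀ x)`, and the second term vanishes when `x` is
orthogonal to the columns of `A`. -/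
theorem range_mulVec_eq_orthogonal [CommRing R] [DecidableEq m] [DecidableEq n] {G : Matrix m m R}
    {A D : Matrix m n R} {B : Matrix m o R} {K' : Matrix o m R} [Fintype o]
    (horth : Bᵀ * G * A = 0) (hdec : B * K' + D * (G * A)ᵀ = 1) :
    Set.range B.mulVec = {x | ∀ z, x ⬝ᵥ G *ᵥ (A *ᵥ z) = 0} := by
  ext x
  refine ⟨?_, fun hx => ⟨K' *ᵥ x, ?_⟩⟩
  · rintro ⟨u, rfl⟩ z
    rw [dotProduct_mulVec_mulVec, horth, zero_mulVec, dotProduct_zero]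
  · have hpair : (G * A)ᵀ *ᵥ x = 0 := funext fun j => by
      have := hx (Pi.single j 1)
      rwa [mulVec_mulVec, dotProduct_mulVec, dotProduct_single, mul_one, ← mulVec_transpose]
        at this
    have := congrArg (· *ᵥ x) hdec
    simpa only [add_mulVec, ← mulVec_mulVec, hpair, mulVec_zero, add_zero, one_mulVec] using this

end MulVec

section RectBlockSum

variable {R : Type*} {m m' n n' p p' : ℕ}

def rectBlockSum [Zero R] (A : Matrix (Fin m) (Fin n) R) (A' : Matrix (Fin m') (Fin n') R) :
    Matrix (Fin (m + m')) (Fin (n + n')) R :=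
  (fromBlocks A 0 0 A').submatrix finSumFinEquiv.symm finSumFinEquiv.symm

theorem blockSum_eq_rectBlockSum (A : Matrix (Fin m) (Fin m) ℤ) (B : Matrix (Fin n) (Fin n) ℤ) :
    blockSum A B = rectBlockSum A B := by
  ext i j
  refine Fin.addCases (fun i => ?_) (fun i => ?_) i <;>
    refine Fin.addCases (fun j => ?_) (fun j => ?_) j <;>
    simp [blockSum, rectBlockSum]

theorem rectBlockSum_mul [NonUnitalNonAssocSemiring R] (A : Matrix (Fin m) (Fin n) R)
    (A' : Matrix (Fin m') (Fin n') R) (B : Matrix (Fin n) (Fin p) R)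
    (B' : Matrix (Fin n') (Fin p') R) :
    rectBlockSum A A' * rectBlockSum B B' = rectBlockSum (A * B) (A' * B') := by
  simp [rectBlockSum, submatrix_mul_equiv, fromBlocks_multiply]

theorem rectBlockSum_transpose [Zero R] (A : Matrix (Fin m) (Fin n) R)
    (A' : Matrix (Fin m') (Fin n') R) :
    (rectBlockSum A A')ᵀ = rectBlockSum Aᵀ A'ᵀ := by
  simp [rectBlockSum, transpose_submatrix, fromBlocks_transpose]

theorem rectBlockSum_add [AddZeroClass R] (A B : Matrix (Fin m) (Fin n) R)
    (A' B' : Matrix (Fin m') (Fin n') R) :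
    rectBlockSum A A' + rectBlockSum B B' = rectBlockSum (A + B) (A' + B') := by
  have hblocks : fromBlocks A 0 0 A' + fromBlocks B 0 0 B' = fromBlocks (A + B) 0 0 (A' + B') := by
    rw [fromBlocks_add, add_zero, add_zero]
  simp only [rectBlockSum, ← hblocks]
  rfl

@[simp]
theorem rectBlockSum_zero [Zero R] :
    rectBlockSum (0 : Matrix (Fin m) (Fin n) R) (0 : Matrix (Fin m') (Fin n') R) = 0 := by
  simp [rectBlockSum]

@[simp]
theorem rectBlockSum_one [Zero R] [One R] :
    rectBlockSum (1 : Matrix (Fin m) (Fin m) R) (1 : Matrix (Fin m') (Fin m') R) = 1 := by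
  simp [rectBlockSum]

end RectBlockSum

/-- `emb` and `compl` are bases of a sublattice isometric to `G₁` and of one isometric to `G₃`;
the integral left inverses `retr` and `complRetr` make them injective and the first one primitive,
and `decomposition` shows that `compl` spans the whole orthogonal complement of `emb`. -/
structure PrimEmbeddingCertificate {a b c : ℕ} (G₁ : Matrix (Fin a) (Fin a) ℤ)
    (G₂ : Matrix (Fin b) (Fin b) ℤ) (G₃ : Matrix (Fin c) (Fin c) ℤ) where
  emb : Matrix (Fin b) (Fin a) ℤ
  retr : Matrix (Fin a) (Fin b) ℤ
  compl : Matrix (Fin b) (Fin c) ℤ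
  complRetr : Matrix (Fin c) (Fin b) ℤ
  dual : Matrix (Fin b) (Fin a) ℤ
  emb_isometry : embᵀ * G₂ * emb = G₁
  retr_mul_emb : retr * emb = 1
  compl_isometry : complᵀ * G₂ * compl = G₃
  compl_orthogonal : complᵀ * G₂ * emb = 0
  complRetr_mul_compl : complRetr * compl = 1
  decomposition : compl * complRetr + dual * (G₂ * emb)ᵀ = 1

namespace PrimEmbeddingCertificate

variable {a b c a' b' c' : ℕ} {G₁ : Matrix (Fin a) (Fin a) ℤ} {G₂ : Matrix (Fin b) (Fin b) ℤ}
  {G₃ : Matrix (Fin c) (Fin c) ℤ} {G₁' : Matrix (Fin a') (Fin a') ℤ}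
  {G₂' : Matrix (Fin b') (Fin b') ℤ} {G₃' : Matrix (Fin c') (Fin c') ℤ}

theorem hasPrimEmbeddingWithComplement (P : PrimEmbeddingCertificate G₁ G₂ G₃) :
    HasPrimEmbeddingWithComplement G₁ G₂ G₃ := by
  refine ⟨P.emb.mulVecLin, mulVec_injective_of_mul_eq_one P.retr_mul_emb, fun x y => ?_,
    fun x t ht hx => mem_range_mulVec_of_smul_mem P.retr_mul_emb ht hx, P.compl.mulVecLin,
    mulVec_injective_of_mul_eq_one P.complRetr_mul_compl,
    range_mulVec_eq_orthogonal P.compl_orthogonal P.decomposition, fun x y => ?_⟩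
  · rw [mulVecLin_apply, mulVecLin_apply, dotProduct_mulVec_mulVec, P.emb_isometry]
  · rw [mulVecLin_apply, mulVecLin_apply, dotProduct_mulVec_mulVec, P.compl_isometry]

def blockSum (P : PrimEmbeddingCertificate G₁ G₂ G₃) (Q : PrimEmbeddingCertificate G₁' G₂' G₃') :
    PrimEmbeddingCertificate (_root_.blockSum G₁ G₁') (_root_.blockSum G₂ G₂')
      (_root_.blockSum G₃ G₃') where
  emb := rectBlockSum P.emb Q.emb
  retr := rectBlockSum P.retr Q.retr
  compl := rectBlockSum P.compl Q.compl
  complRetr := rectBlockSum P.complRetr Q.complRetr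
  dual := rectBlockSum P.dual Q.dual
  emb_isometry := by
    simp only [blockSum_eq_rectBlockSum, rectBlockSum_transpose, rectBlockSum_mul, P.emb_isometry,
      Q.emb_isometry]
  retr_mul_emb := by simp only [rectBlockSum_mul, P.retr_mul_emb, Q.retr_mul_emb, rectBlockSum_one]
  compl_isometry := by
    simp only [blockSum_eq_rectBlockSum, rectBlockSum_transpose, rectBlockSum_mul,
      P.compl_isometry, Q.compl_isometry]
  compl_orthogonal := by
    simp only [blockSum_eq_rectBlockSum, rectBlockSum_transpose, rectBlockSum_mul,
      P.compl_orthogonal, Q.compl_orthogonal, rectBlockSum_zero]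
  complRetr_mul_compl := by
    simp only [rectBlockSum_mul, P.complRetr_mul_compl, Q.complRetr_mul_compl, rectBlockSum_one]
  decomposition := by
    simp only [blockSum_eq_rectBlockSum, rectBlockSum_transpose, rectBlockSum_mul,
      rectBlockSum_add, P.decomposition, Q.decomposition, rectBlockSum_one]

end PrimEmbeddingCertificate

/-- Integral because `E₈` is unimodular; its columns are the negated fundamental weights, the basis
dual to the simple roots. -/
def gramE8Inv : Matrix (Fin 8) (Fin 8) ℤ :=
  !![-4, -7, -10, -8, -6, -4, -2, -5;
    -7, -14, -20, -16, -12, -8, -4, -10;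
    -10, -20, -30, -24, -18, -12, -6, -15;
    -8, -16, -24, -20, -15, -10, -5, -12;
    -6, -12, -18, -15, -12, -8, -4, -9;
    -4, -8, -12, -10, -8, -6, -3, -6;
    -2, -4, -6, -5, -4, -3, -2, -3;
    -5, -10, -15, -12, -9, -6, -3, -8]

/-- In simple-root coordinates the simple roots `α (s j)` are unit vectors. -/
def simpleRoots {k : ℕ} (s : Fin k → Fin 8) : Matrix (Fin 8) (Fin k) ℤ :=
  (1 : Matrix (Fin 8) (Fin 8) ℤ).submatrix id s

def certE8E8 : PrimEmbeddingCertificate gramE8 gramE8 (0 : Matrix (Fin 0) (Fin 0) ℤ) where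
  emb := 1
  retr := 1
  compl := 0
  complRetr := 0
  dual := gramE8Inv
  emb_isometry := by decide
  retr_mul_emb := by decide
  compl_isometry := by decide
  compl_orthogonal := by decide
  complRetr_mul_compl := by decide
  decomposition := by decide

def certA1E8 : PrimEmbeddingCertificate gramA1 gramE8 gramE7 where
  emb := !![2; 4; 6; 5; 4; 3; 2; 3]
  retr := !![0, 0, 0, 1, -1, 0, 0, 0]
  compl := simpleRoots ![0, 1, 2, 3, 4, 5, 7]
  complRetr := (simpleRoots ![0, 1, 2, 3, 4, 5, 7])ᵀ
  dual := !![0; 0; 0; 0; 0; 0; -1; 0]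
  emb_isometry := by decide
  retr_mul_emb := by decide
  compl_isometry := by decide
  compl_orthogonal := by decide
  complRetr_mul_compl := by decide
  decomposition := by decide

/-- The complement is the `D₄` on the roots `-θ, α₆, α₅, α₁ + 2α₂ + 2α₃ + 2α₄ + α₅ + α₇`. -/
def certD4E8 : PrimEmbeddingCertificate gramD4 gramE8 gramD4 where
  emb := simpleRoots ![1, 2, 3, 7]
  retr := (simpleRoots ![1, 2, 3, 7])ᵀ
  compl :=
    !![-2, 0, 0, 0;
      -4, 0, 0, 1;
      -6, 0, 0, 2;
      -5, 0, 0, 2;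
      -4, 0, 0, 2;
      -3, 0, 1, 1;
      -2, 1, 0, 0;
      -3, 0, 0, 1]
  complRetr :=
    !![-4, 2, 0, 3, -4, 0, 0, 0;
      -4, 2, 0, 2, -3, 0, 1, 0;
      -2, 1, 0, 1, -2, 1, 0, 0;
      -2, 1, 0, 0, 0, 0, 0, 0]
  dual := gramE8Inv * simpleRoots ![1, 2, 3, 7]
  emb_isometry := by decide
  retr_mul_emb := by decide
  compl_isometry := by decide
  compl_orthogonal := by decide
  complRetr_mul_compl := by decide
  decomposition := by decide

def certA14E8 :
    PrimEmbeddingCertificate (diagonal fun _ : Fin 4 => (-2 : ℤ)) gramE8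
      (diagonal fun _ : Fin 4 => (-2 : ℤ)) where
  emb := simpleRoots ![1, 3, 5, 7]
  retr := (simpleRoots ![1, 3, 5, 7])ᵀ
  compl :=
    !![2, 2, 0, 0;
      4, 3, 1, 1;
      6, 4, 2, 2;
      5, 3, 2, 1;
      4, 2, 2, 0;
      3, 1, 1, 0;
      2, 0, 0, 0;
      3, 2, 1, 1]
  complRetr :=
    !![2, -4, 6, -5, 4, -3, 2, -3;
      2, -3, 4, -3, 2, -1, 0, -2;
      0, -1, 2, -2, 2, -1, 0, -1;
      0, -1, 2, -1, 0, 0, 0, -1]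
  dual := gramE8Inv * simpleRoots ![1, 3, 5, 7]
  emb_isometry := by decide
  retr_mul_emb := by decide
  compl_isometry := by decide
  compl_orthogonal := by decide
  complRetr_mul_compl := by decide
  decomposition := by decide

/-- `E₈ ⊕ A₁⁵` embeds primitively into `E₈³` with orthogonal complement `E₇ ⊕ A₁⁴`, and
`E₈ ⊕ A₁ ⊕ D₄` embeds primitively into `E₈³` with orthogonal complement `E₇ ⊕ D₄`. -/
theorem primitive_embeddings_into_E8x3 :
    HasPrimEmbeddingWithComplement gramE8A15 gramE8x3 gramE7A14 ∧
    HasPrimEmbeddingWithComplement gramE8A1D4 gramE8x3 gramE7D4 := by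
  have hE8A15 : gramE8A15 = blockSum gramE8 (blockSum gramA1 (diagonal fun _ : Fin 4 => -2)) := by
    decide
  have hE7A14 : gramE7A14 = blockSum (0 : Matrix (Fin 0) (Fin 0) ℤ)
      (blockSum gramE7 (diagonal fun _ : Fin 4 => -2)) := by
    decide
  have hE7D4 : gramE7D4 = blockSum (0 : Matrix (Fin 0) (Fin 0) ℤ) (blockSum gramE7 gramD4) := by
    decide
  constructor
  · have h := (certE8E8.blockSum (certA1E8.blockSum certA14E8)).hasPrimEmbeddingWithComplement
    rwa [← hE8A15, ← hE7A14] at h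
  · have h := (certE8E8.blockSum (certA1E8.blockSum certD4E8)).hasPrimEmbeddingWithComplement
    rwa [← hE7D4] at h
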